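/- Let N ≥ 1, let w_1,…,w_N, u_1,…,u_N ∈ ℝ and σ² ∈ ℝ, and define the moments M_j := Σ_{i=1}^N w_i·Δ_j(u_i, σ²) for j ∈ ℕ. Then for every j ∈ ℕ, the pure power sums are recovered by the inversion formula Σ_{i=1}^N w_i·u_i^j = Σ_{k=0}^{⌊j/2⌋} (j!/(k!(j−2k)!))·(−σ²/2)^k·M_{j−2k}. -/

import Mathlib

/-!
Writing `Δ_j(u, t)` as the coefficient of `x^j / j!` in `exp(u x + t x² / 2)` makes
`t ↦ Δ(·, t)` a semigroup: `Δ_j(u, s + t) = Σ_k (j!/(k!(j−2k)!)) (s/2)^k Δ_{j−2k}(u, t)`,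
proved by expanding `((s + t)/2)^n` binomially and regrouping the double sum.
Taking `s = −t` and `Δ_j(u, 0) = u^j` inverts each `Δ_j(u_i, σ²)`; the theorem is the
weighted sum of these identities.
-/

noncomputable def DeltaFun (j : ℕ) (u t : ℝ) : ℝ :=
  ∑ k ∈ Finset.range (j/2 + 1),
    ((j.factorial : ℝ) / ((k.factorial : ℝ) * ((j - 2*k).factorial : ℝ)))
      * (t/2)^k * u^(j - 2*k)

open Finset Nat

lemma factorial_div_mul_choose {j k m : ℕ} (h : 2 * (k + m) ≤ j) :
    (j ! : ℝ) / ((k + m)! * (j - 2 * (k + m))!) * (k + m).choose k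
      = (j ! : ℝ) / (k ! * (j - 2 * k)!) * ((j - 2 * k)! / (m ! * (j - 2 * k - 2 * m)!)) := by
  rw [Nat.cast_choose ℝ (Nat.le_add_right k m), Nat.add_sub_cancel_left,
    show j - 2 * k - 2 * m = j - 2 * (k + m) by omega]
  have : ((j - 2 * k)! : ℝ) ≠ 0 := by positivity
  field_simp

lemma DeltaFun_add (j : ℕ) (u s t : ℝ) :
    DeltaFun j u (s + t) = ∑ k ∈ range (j / 2 + 1),
      (j ! : ℝ) / (k ! * (j - 2 * k)!) * (s / 2) ^ k * DeltaFun (j - 2 * k) u t := by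
  calc DeltaFun j u (s + t)
      = ∑ n ∈ range (j / 2 + 1), ∑ k ∈ range (n + 1), (j ! : ℝ) / (n ! * (j - 2 * n)!)
          * n.choose k * (s / 2) ^ k * (t / 2) ^ (n - k) * u ^ (j - 2 * n) := by
        refine sum_congr rfl fun n _ => ?_
        rw [add_div, add_pow, mul_sum, sum_mul]
        refine sum_congr rfl fun k _ => by ring
    _ = ∑ k ∈ range (j / 2 + 1), ∑ n ∈ Ico k (j / 2 + 1), (j ! : ℝ) / (n ! * (j - 2 * n)!)
          * n.choose k * (s / 2) ^ k * (t / 2) ^ (n - k) * u ^ (j - 2 * n) := by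
        simp only [range_eq_Ico, sum_Ico_Ico_comm]
    _ = ∑ k ∈ range (j / 2 + 1), ∑ m ∈ range ((j - 2 * k) / 2 + 1),
          (j ! : ℝ) / (k ! * (j - 2 * k)!) * ((j - 2 * k)! / (m ! * (j - 2 * k - 2 * m)!))
          * (s / 2) ^ k * (t / 2) ^ m * u ^ (j - 2 * k - 2 * m) := by
        refine sum_congr rfl fun k hk => ?_
        rw [mem_range] at hk
        rw [sum_Ico_eq_sum_range, show j / 2 + 1 - k = (j - 2 * k) / 2 + 1 by omega]
        refine sum_congr rfl fun m hm => ?_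
        rw [mem_range] at hm
        rw [← factorial_div_mul_choose (by omega), Nat.add_sub_cancel_left,
          show j - 2 * k - 2 * m = j - 2 * (k + m) by omega]
    _ = _ := by
        simp only [DeltaFun, mul_sum]
        refine sum_congr rfl fun k _ => sum_congr rfl fun m _ => by ring

lemma DeltaFun_zero_right (j : ℕ) (u : ℝ) : DeltaFun j u 0 = u ^ j := by
  have : (j ! : ℝ) ≠ 0 := cast_ne_zero.mpr (factorial_ne_zero j)
  rw [DeltaFun, sum_eq_single 0] <;> simp +contextual [this]

lemma pow_eq_sum_DeltaFun (j : ℕ) (u t : ℝ) :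
    u ^ j = ∑ k ∈ range (j / 2 + 1),
      (j ! : ℝ) / (k ! * (j - 2 * k)!) * (-t / 2) ^ k * DeltaFun (j - 2 * k) u t := by
  rw [← DeltaFun_add, neg_add_cancel, DeltaFun_zero_right]

theorem stmt14_general (N : ℕ) (w u : Fin N → ℝ) (σ2 : ℝ) (j : ℕ) :
    ∑ i, w i * (u i)^j
      = ∑ k ∈ Finset.range (j/2 + 1),
          ((j.factorial : ℝ) / ((k.factorial : ℝ) * ((j - 2*k).factorial : ℝ)))
            * (-σ2/2)^k * (∑ i, w i * DeltaFun (j - 2*k) (u i) σ2) := by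
  simp_rw [pow_eq_sum_DeltaFun j _ σ2, mul_sum]
  rw [sum_comm]
  refine sum_congr rfl fun k _ => sum_congr rfl fun i _ => by ring

/-- Inversion formula: the power sums `Σᵢ wᵢ uᵢ^j` are recovered from the moments
`M_j = Σᵢ wᵢ Δ_j(uᵢ,σ²)` by
`Σᵢ wᵢ uᵢ^j = Σ_{k=0}^{⌊j/2⌋} (j!/(k!(j−2k)!))·(−σ²/2)^k·M_{j−2k}`. -/
theorem stmt14 (N : ℕ) (hN : 1 ≤ N) (w u : Fin N → ℝ) (σ2 : ℝ) (j : ℕ) :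
    ∑ i, w i * (u i)^j
      = ∑ k ∈ Finset.range (j/2 + 1),
          ((j.factorial : ℝ) / ((k.factorial : ℝ) * ((j - 2*k).factorial : ℝ)))
            * (-σ2/2)^k * (∑ i, w i * DeltaFun (j - 2*k) (u i) σ2) :=
  stmt14_general N w u σ2 j
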